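/- arXiv:1111.1411 — 3 statements merged into one kernel-verified Lean document; each statement's English description precedes it below -/
import Mathlib

section
/- For integers n ≥ 1 and r ≥ 1, the Stirling-type sum S(n+r, r) := (1/r!) Σ_{j=0}^{r} (-1)^j binomial(r,j) (r-j)^{n+r} satisfies the identity S(n+r,r) · r! = (n+r)! · Σ_{(k_1,...,k_r) ∈ K_{n,r}} ∏_{i=1}^r 1/(k_i+1)!, where K_{n,r} is the set of r-tuples of nonnegative integers summing to n. -/
/-!
Both sides are `(n + r)!` times the coefficient of `x ^ (n + r)` in `(eˣ - 1) ^ r`. Expanding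
`(eˣ - 1) ^ r = ∑ⱼ (-1) ^ j C(r, j) e^{(r - j) x}` by the binomial theorem gives the alternating sum;
writing `eˣ - 1 = x ψ(x)` with `ψ(x) = ∑ₖ xᵏ / (k + 1)!` gives `x ^ r ψ(x) ^ r`, whose coefficient of
`x ^ (n + r)` is the sum over compositions of `n` into `r` parts.
-/

open Finset PowerSeries

lemma Finset.sum_finsuppAntidiag_eq_sum_piAntidiag {ι μ M : Type*} [DecidableEq ι]
    [AddCommMonoid μ] [HasAntidiagonal μ] [DecidableEq μ] [AddCommMonoid M]
    (s : Finset ι) (n : μ) (g : (ι → μ) → M) :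
    ∑ l ∈ finsuppAntidiag s n, g l = ∑ f ∈ piAntidiag s n, g f := by
  rw [finsuppAntidiag, sum_map, ← sum_attach (piAntidiag s n)]
  rfl

lemma PowerSeries.coeff_pow_eq_sum_antidiagonalTuple {R : Type*} [CommSemiring R]
    (r d : ℕ) (φ : R⟦X⟧) :
    coeff d (φ ^ r) = ∑ k ∈ Nat.antidiagonalTuple r d, ∏ i, coeff (k i) φ := by
  rw [← Fin.prod_const, coeff_prod,
    sum_finsuppAntidiag_eq_sum_piAntidiag _ _ fun k => ∏ i, coeff (k i) φ,
    piAntidiag_univ_fin_eq_antidiagonalTuple]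

namespace PowerSeries

variable (K : Type*) [Field K] [CharZero K]

noncomputable def expSubOneDivX : K⟦X⟧ := mk fun k => 1 / (k + 1).factorial

lemma X_mul_expSubOneDivX : X * expSubOneDivX K = exp K - 1 := by
  ext (_ | m) <;> simp [expSubOneDivX, coeff_succ_X_mul]

lemma coeff_exp_sub_one_pow_mul_factorial (r m : ℕ) :
    coeff m ((exp K - 1) ^ r) * m.factorial
      = ∑ j ∈ range (r + 1), (-1) ^ j * r.choose j * ((r - j : ℕ) : K) ^ m := by
  rw [sub_eq_neg_add, add_pow, map_sum, sum_mul]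
  refine sum_congr rfl fun j _ => ?_
  have hconst : (-1 : K⟦X⟧) ^ j * exp K ^ (r - j) * (r.choose j : K⟦X⟧)
      = C ((-1) ^ j * r.choose j : K) * rescale ((r - j : ℕ) : K) (exp K) := by
    simp only [exp_pow_eq_rescale_exp, map_mul, map_pow, map_neg, map_one, map_natCast]
    ring
  have hm : (m.factorial : K) ≠ 0 := Nat.cast_ne_zero.2 m.factorial_ne_zero
  rw [hconst, coeff_C_mul, coeff_rescale, coeff_exp]
  simp only [map_div₀, map_one, map_natCast]
  field_simp

lemma coeff_add_exp_sub_one_pow (n r : ℕ) :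
    coeff (n + r) ((exp K - 1) ^ r)
      = ∑ k ∈ Nat.antidiagonalTuple r n, ∏ i, (1 : K) / (k i + 1).factorial := by
  rw [← X_mul_expSubOneDivX, mul_pow, coeff_X_pow_mul,
    coeff_pow_eq_sum_antidiagonalTuple]
  simp only [expSubOneDivX, coeff_mk]

end PowerSeries

theorem stirling_sum_identity_general (n r : ℕ) :
    ((1 : ℚ) / Nat.factorial r *
        ∑ j ∈ Finset.range (r + 1),
          (-1) ^ j * Nat.choose r j * ((r - j : ℕ) : ℚ) ^ (n + r)) * Nat.factorial r
      = Nat.factorial (n + r) *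
        ∑ k ∈ Finset.Nat.antidiagonalTuple r n, ∏ i, (1 : ℚ) / Nat.factorial (k i + 1) := by
  have hr : (r.factorial : ℚ) ≠ 0 := Nat.cast_ne_zero.2 r.factorial_ne_zero
  -- The lemmas are applied as terms: their `exp ℚ` uses `DivisionRing.toRatAlgebra`, which is
  -- only defeq, not syntactically equal, to the `Algebra.id ℚ` elaborated here, so `rw` fails.
  calc _ = ∑ j ∈ range (r + 1), (-1) ^ j * r.choose j * ((r - j : ℕ) : ℚ) ^ (n + r) := by
        field_simp
    _ = coeff (n + r) ((exp ℚ - 1) ^ r) * (n + r).factorial :=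
        (coeff_exp_sub_one_pow_mul_factorial ℚ r (n + r)).symm
    _ = (n + r).factorial * coeff (n + r) ((exp ℚ - 1) ^ r) := mul_comm _ _
    _ = _ := congrArg _ (coeff_add_exp_sub_one_pow ℚ n r)

theorem stirling_sum_identity (n r : ℕ) (hn : 1 ≤ n) (hr : 1 ≤ r) :
    ((1 : ℚ) / Nat.factorial r *
        ∑ j ∈ Finset.range (r + 1),
          (-1) ^ j * Nat.choose r j * ((r - j : ℕ) : ℚ) ^ (n + r)) * Nat.factorial r
      = Nat.factorial (n + r) *
        ∑ k ∈ Finset.Nat.antidiagonalTuple r n, ∏ i, (1 : ℚ) / Nat.factorial (k i + 1) :=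
  stirling_sum_identity_general n r
end

section
/- Geometric genus formula for homogeneous complete intersections as a binomial identity: for positive integers p_1,...,p_r and N = n + r, the alternating sum Σ_{S ⊆ {1,...,r}} (-1)^{|S|} binomial((Σ_k p_k) - Σ_{i∈S} p_i, N) equals Σ_{(k_1,...,k_r) ∈ K_{n,r}} ∏_{i=1}^r binomial(p_i, k_i + 1). -/
/-!
Both sides are the coefficient of `X ^ (n + r)` in `∏ i, ((1 + X) ^ p i - 1)`. Expanding the
product over subsets gives the alternating sum; writing `(1 + X) ^ p - 1 = X * ∑ k, C(p, k + 1) X ^ k`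
turns it into `X ^ r` times a product whose coefficient of `X ^ n` is the sum over `K_{n,r}`.
-/

open Finset PowerSeries

namespace PowerSeries

variable {R : Type*}

theorem coeff_one_add_X_pow [CommSemiring R] (q m : ℕ) :
    coeff m ((1 + X : R⟦X⟧) ^ q) = q.choose m := by
  rw [← Polynomial.coe_X, ← Polynomial.coe_one, ← Polynomial.coe_add, ← Polynomial.coe_pow,
    Polynomial.coeff_coe, Polynomial.coeff_one_add_X_pow]

theorem coeff_prod_fin [CommSemiring R] {r : ℕ} (f : Fin r → R⟦X⟧) (n : ℕ) :
    coeff n (∏ i, f i) = ∑ k ∈ Nat.antidiagonalTuple r n, ∏ i, coeff (k i) (f i) := by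
  rw [coeff_prod]
  exact sum_equiv Finsupp.equivFunOnFinite (by simp [Nat.mem_antidiagonalTuple]) (by simp)

theorem one_add_X_pow_sub_one [CommRing R] (q : ℕ) :
    (1 + X : R⟦X⟧) ^ q - 1 = X * mk fun k => (q.choose (k + 1) : R) := by
  ext (_ | m)
  · simp
  · simp [coeff_one_add_X_pow, coeff_succ_X_mul]

theorem coeff_prod_one_add_X_pow_sub_one_eq_sum_powerset [CommRing R] {ι : Type*} [Fintype ι]
    (p : ι → ℕ) (N : ℕ) :
    coeff N (∏ i, ((1 + X : R⟦X⟧) ^ p i - 1)) =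
      ∑ S : Finset ι, (-1) ^ #S * ((∑ i, p i - ∑ i ∈ S, p i).choose N : R) := by
  classical
  have sum_compl (S : Finset ι) : ∑ i ∈ univ \ S, p i = ∑ i, p i - ∑ i ∈ S, p i :=
    Nat.eq_sub_of_add_eq (sum_sdiff (subset_univ S))
  simp only [prod_sub, prod_const_one, mul_one, prod_pow_eq_pow_sum, sum_compl, powerset_univ,
    map_sum]
  refine sum_congr rfl fun S _ => ?_
  rw [show ((-1) ^ #S : R⟦X⟧) = C ((-1) ^ #S) by simp, coeff_C_mul, coeff_one_add_X_pow]

theorem coeff_prod_one_add_X_pow_sub_one_eq_sum_antidiagonalTuple [CommRing R] {r : ℕ}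
    (p : Fin r → ℕ) (n : ℕ) :
    coeff (n + r) (∏ i, ((1 + X : R⟦X⟧) ^ p i - 1)) =
      ∑ k ∈ Nat.antidiagonalTuple r n, ∏ i, ((p i).choose (k i + 1) : R) := by
  simp only [one_add_X_pow_sub_one, prod_mul_distrib, prod_const, card_univ, Fintype.card_fin,
    coeff_X_pow_mul, coeff_prod_fin, coeff_mk]

end PowerSeries

theorem genus_binomial_identity_general (n r : ℕ) (p : Fin r → ℕ) :
    (∑ S : Finset (Fin r),
        (-1 : ℤ) ^ S.card * Nat.choose ((∑ i, p i) - ∑ i ∈ S, p i) (n + r))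
      = ∑ k ∈ Finset.Nat.antidiagonalTuple r n, ∏ i, (Nat.choose (p i) (k i + 1) : ℤ) := by
  rw [← coeff_prod_one_add_X_pow_sub_one_eq_sum_powerset,
    coeff_prod_one_add_X_pow_sub_one_eq_sum_antidiagonalTuple]

theorem genus_binomial_identity (n r : ℕ) (hr : 1 ≤ r) (p : Fin r → ℕ)
    (hp : ∀ i, 1 ≤ p i) :
    (∑ S : Finset (Fin r),
        (-1 : ℤ) ^ S.card * Nat.choose ((∑ i, p i) - ∑ i ∈ S, p i) (n + r))
      = ∑ k ∈ Finset.Nat.antidiagonalTuple r n, ∏ i, (Nat.choose (p i) (k i + 1) : ℤ) :=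
  genus_binomial_identity_general n r p
end

section
/- Equal-degree asymptotics: for fixed integers n ≥ 1 and r ≥ 1, with μ(p) = (-1)^n (p^r Σ_{j=0}^n (1-p)^j binomial(j+r-1, j) - 1) and p_g(p) = Σ_{k ∈ K_{n,r}} ∏_{i=1}^r binomial(p, k_i+1), the ratio μ(p)/p_g(p) tends to C_{n,r} = |K_{n,r}| / (Σ_{k ∈ K_{n,r}} ∏_i 1/(k_i+1)!) as p → ∞. -/
/-!
Both `μ(p)` and `p_g(p)` are polynomials in `p` of degree `n + r`, so their ratio tends to the
ratio of the leading coefficients. In `μ(p)` only the summand `j = n` reaches degree `n + r`,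
with coefficient `(-1)^n binomial(n + r - 1, n)`, and the sign cancels against the prefactor;
`binomial(n + r - 1, n)` is the number of weak compositions of `n` into `r` parts, i.e. `|K_{n,r}|`.
In `p_g(p)` every summand has degree `Σ (k_i + 1) = n + r` and `binomial(p, m) ~ p^m / m!`.
-/

open Filter Finset Topology Asymptotics

/-- `C n r = |K_{n,r}| / Σ_{k ∈ K_{n,r}} ∏ 1/(k_i+1)!`. -/
noncomputable def Cnr (n r : ℕ) : ℝ :=
  ((Finset.Nat.antidiagonalTuple r n).card : ℝ) /
    ∑ k ∈ Finset.Nat.antidiagonalTuple r n, ∏ i, (1 : ℝ) / Nat.factorial (k i + 1)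

/-- Milnor number of the homogeneous ICIS of multidegree `(p,…,p)`. -/
noncomputable def muEq (n r p : ℕ) : ℝ :=
  (-1) ^ n * ((p : ℝ) ^ r *
    (∑ j ∈ Finset.range (n + 1), (1 - (p : ℝ)) ^ j * Nat.choose (j + r - 1) j) - 1)

/-- Geometric genus of the homogeneous ICIS of multidegree `(p,…,p)`. -/
noncomputable def pgEq (n r p : ℕ) : ℝ :=
  ∑ k ∈ Finset.Nat.antidiagonalTuple r n, ∏ i, (Nat.choose p (k i + 1) : ℝ)

lemma tendsto_div_of_tendsto_div_common {α 𝕜 : Type*} [Field 𝕜] [TopologicalSpace 𝕜]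
    [IsTopologicalDivisionRing 𝕜] {l : Filter α} {f g h : α → 𝕜} {a b : 𝕜}
    (hf : Tendsto (fun x => f x / h x) l (𝓝 a)) (hg : Tendsto (fun x => g x / h x) l (𝓝 b))
    (hb : b ≠ 0) (hh : ∀ᶠ x in l, h x ≠ 0) :
    Tendsto (fun x => f x / g x) l (𝓝 (a / b)) :=
  (hf.div hg hb).congr' (hh.mono fun _ hx => div_div_div_cancel_right₀ hx _ _)

lemma eventually_natCast_pow_ne_zero (d : ℕ) : ∀ᶠ p : ℕ in atTop, (p : ℝ) ^ d ≠ 0 :=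
  (eventually_ne_atTop 0).mono fun _ hp => pow_ne_zero _ (Nat.cast_ne_zero.mpr hp)

lemma tendsto_choose_div_pow (m : ℕ) :
    Tendsto (fun p : ℕ => (p.choose m : ℝ) / (p : ℝ) ^ m) atTop (𝓝 (1 / m.factorial)) := by
  have hequiv := (isEquivalent_choose m).div (IsEquivalent.refl (u := fun p : ℕ => (p : ℝ) ^ m))
  refine hequiv.symm.tendsto_nhds (tendsto_const_nhds.congr' ?_)
  filter_upwards [eventually_natCast_pow_ne_zero m] with p hp
  simp only [Pi.div_apply]
  field_simp

lemma tendsto_one_sub_pow_div_pow {j n : ℕ} (hj : j ≤ n) :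
    Tendsto (fun p : ℕ => (1 - (p : ℝ)) ^ j / (p : ℝ) ^ n) atTop
      (𝓝 ((-1) ^ j * 0 ^ (n - j))) := by
  have hquot : Tendsto (fun p : ℕ => (p : ℝ)⁻¹ - 1) atTop (𝓝 (-1)) := by
    simpa using (tendsto_inv_atTop_nhds_zero_nat (𝕜 := ℝ)).sub_const 1
  refine ((hquot.pow j).mul ((tendsto_inv_atTop_nhds_zero_nat (𝕜 := ℝ)).pow (n - j))).congr' ?_
  filter_upwards [eventually_ne_atTop 0] with p hp
  have hp : (p : ℝ) ≠ 0 := Nat.cast_ne_zero.mpr hp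
  rw [show (p : ℝ)⁻¹ - 1 = (1 - p) / p by field_simp, div_pow, inv_pow]
  conv_rhs => rw [← Nat.add_sub_cancel' hj, pow_add]
  field_simp

lemma tendsto_sum_one_sub_pow_mul_div_pow (c : ℕ → ℝ) (n : ℕ) :
    Tendsto (fun p : ℕ => (∑ j ∈ range (n + 1), (1 - (p : ℝ)) ^ j * c j) / (p : ℝ) ^ n)
      atTop (𝓝 ((-1) ^ n * c n)) := by
  have hterms := tendsto_finsetSum (range (n + 1)) fun j hj =>
    (tendsto_one_sub_pow_div_pow (Nat.lt_succ_iff.mp (mem_range.mp hj))).mul_const (c j)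
  rw [sum_eq_single_of_mem n (self_mem_range_succ n) fun j hj hjn => by
    rw [zero_pow (by have := mem_range.mp hj; omega), mul_zero, zero_mul]] at hterms
  simp only [Nat.sub_self, pow_zero, mul_one] at hterms
  refine hterms.congr fun p => ?_
  rw [sum_div]
  exact sum_congr rfl fun j _ => div_mul_eq_mul_div _ _ _

lemma tendsto_muEq_div_pow (n : ℕ) {r : ℕ} (hr : 0 < r) :
    Tendsto (fun p : ℕ => muEq n r p / (p : ℝ) ^ (n + r)) atTop
      (𝓝 ((n + r - 1).choose n)) := by
  have hlim := ((tendsto_sum_one_sub_pow_mul_div_pow (fun j => ((j + r - 1).choose j : ℝ)) n).sub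
    ((tendsto_inv_atTop_nhds_zero_nat (𝕜 := ℝ)).pow (n + r))).const_mul ((-1) ^ n)
  have hsign : (-1 : ℝ) ^ n * ((-1) ^ n * (n + r - 1).choose n - 0 ^ (n + r))
      = (n + r - 1).choose n := by
    rw [zero_pow (by omega), sub_zero, ← mul_assoc, ← mul_pow]
    simp
  rw [hsign] at hlim
  refine hlim.congr' ?_
  filter_upwards [eventually_ne_atTop 0] with p hp
  have hp : (p : ℝ) ≠ 0 := Nat.cast_ne_zero.mpr hp
  rw [muEq, inv_pow, pow_add]
  field_simp

lemma sum_succ_of_mem_antidiagonalTuple {r n : ℕ} {k : Fin r → ℕ}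
    (hk : k ∈ Nat.antidiagonalTuple r n) : ∑ i, (k i + 1) = n + r := by
  rw [sum_add_distrib, Nat.mem_antidiagonalTuple.mp hk]
  simp

lemma tendsto_pgEq_div_pow (n r : ℕ) :
    Tendsto (fun p : ℕ => pgEq n r p / (p : ℝ) ^ (n + r)) atTop
      (𝓝 (∑ k ∈ Nat.antidiagonalTuple r n, ∏ i, (1 : ℝ) / (k i + 1).factorial)) := by
  refine (tendsto_finsetSum _ fun k _ =>
    tendsto_finsetProd _ fun i _ => tendsto_choose_div_pow (k i + 1)).congr fun p => ?_
  rw [pgEq, sum_div]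
  refine sum_congr rfl fun k hk => ?_
  rw [prod_div_distrib, prod_pow_eq_pow_sum, sum_succ_of_mem_antidiagonalTuple hk]

lemma card_antidiagonalTuple (r n : ℕ) :
    #(Nat.antidiagonalTuple r n) = (n + r - 1).choose n := by
  rw [card_eq_of_equiv_fintype
      ((Equiv.subtypeEquivRight fun _ => Nat.mem_antidiagonalTuple).trans
        (Sym.equivNatSumOfFintype (Fin r) n).symm),
    Sym.card_sym_eq_choose, Fintype.card_fin, add_comm]

lemma antidiagonalTuple_nonempty {r : ℕ} (hr : 0 < r) (n : ℕ) :
    (Nat.antidiagonalTuple r n).Nonempty :=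
  ⟨Pi.single (⟨0, hr⟩ : Fin r) n, by simp [Nat.mem_antidiagonalTuple]⟩

theorem ratio_tendsto_C_general (n r : ℕ) (hr : 1 ≤ r) :
    Filter.Tendsto (fun p : ℕ => muEq n r p / pgEq n r p) Filter.atTop
      (nhds (Cnr n r)) := by
  have hleading_pos :
      0 < ∑ k ∈ Nat.antidiagonalTuple r n, ∏ i, (1 : ℝ) / (k i + 1).factorial :=
    sum_pos (fun k _ => prod_pos fun i _ => by positivity) (antidiagonalTuple_nonempty hr n)
  rw [Cnr, card_antidiagonalTuple]
  exact tendsto_div_of_tendsto_div_common (tendsto_muEq_div_pow n hr) (tendsto_pgEq_div_pow n r)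
    hleading_pos.ne' (eventually_natCast_pow_ne_zero (n + r))

theorem ratio_tendsto_C (n r : ℕ) (hn : 1 ≤ n) (hr : 1 ≤ r) :
    Filter.Tendsto (fun p : ℕ => muEq n r p / pgEq n r p) Filter.atTop
      (nhds (Cnr n r)) :=
  ratio_tendsto_C_general n r hr
end
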